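/- Let L ⊆ ℤⁿ be a lattice with L_pure ≠ {0}, let s = |σ_L|, and let F be an I_L-fiber. Then the cardinality of the equivalence class F̄ = {G : G is an I_L-fiber, G ≡_I F} equals the cardinality of the quotient group ℤ^s/(L_pure)_σ, where (L_pure)_σ ⊆ ℤ^s is the image of L_pure under the projection u ↦ (u_i)_{i∈σ_L}. -/
import Mathlib


open MvPolynomial

noncomputable section

/-- The integer vector associated to a natural exponent vector. -/
def natVec {ι : Type*} (u : ι →₀ ℕ) : ι → ℤ := fun i => (u i : ℤ)

/-- The lattice ideal `I_L` of a lattice `L ⊆ ℤ^ι` in `k[x_i : i ∈ ι]`. -/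
def latticeIdeal (k : Type*) [Field k] {ι : Type*} (L : Submodule ℤ (ι → ℤ)) :
    Ideal (MvPolynomial ι k) :=
  Ideal.span {f | ∃ u v : ι →₀ ℕ, natVec u - natVec v ∈ L ∧
    f = monomial u (1 : k) - monomial v 1}

/-- `f` is a binomial `x^u - x^v` belonging to the lattice ideal `I_L`. -/
def IsLatticeBinomial (k : Type*) [Field k] {ι : Type*} (L : Submodule ℤ (ι → ℤ))
    (f : MvPolynomial ι k) : Prop :=
  ∃ u v : ι →₀ ℕ, natVec u - natVec v ∈ L ∧ f = monomial u (1 : k) - monomial v 1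

/-- The `I_L`-fiber of `u` : all exponent vectors `v` with `v - u ∈ L`. -/
def fiber {ι : Type*} (L : Submodule ℤ (ι → ℤ)) (u : ι →₀ ℕ) : Set (ι →₀ ℕ) :=
  {v | natVec v - natVec u ∈ L}

/-- `L⁺ = L ∩ ℕ^ι`. -/
def Lplus {ι : Type*} (L : Submodule ℤ (ι → ℤ)) : Set (ι → ℤ) :=
  {w | w ∈ L ∧ ∀ i, 0 ≤ w i}

/-- `L_pure`, the subgroup of `L` generated by `L⁺`. -/
def Lpure {ι : Type*} (L : Submodule ℤ (ι → ℤ)) : Submodule ℤ (ι → ℤ) :=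
  Submodule.span ℤ (Lplus L)

/-- `σ_L`, the union of the supports of elements of `L⁺`. -/
def sigmaL {ι : Type*} (L : Submodule ℤ (ι → ℤ)) : Set ι :=
  {i | ∃ w ∈ Lplus L, w i ≠ 0}

/-- `F̄ ≤_I Ḡ` : some translate of `F` is contained in `G`. -/
def fiberLE {ι : Type*} (F G : Set (ι →₀ ℕ)) : Prop :=
  ∃ t : ι →₀ ℕ, (fun v => t + v) '' F ⊆ G

/-- `F ≡_I G` : equivalence of fibers. -/
def fiberEquiv {ι : Type*} (F G : Set (ι →₀ ℕ)) : Prop :=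
  fiberLE F G ∧ fiberLE G F

/-- `F̄ <_I Ḡ`. -/
def fiberLT {ι : Type*} (F G : Set (ι →₀ ℕ)) : Prop :=
  fiberLE F G ∧ ¬ fiberEquiv F G

/-- The ideal `I_{<F̄}` generated by binomials of `I_L` whose fiber class is `<_I F̄`. -/
def idealLT (k : Type*) [Field k] {ι : Type*} (L : Submodule ℤ (ι → ℤ))
    (F : Set (ι →₀ ℕ)) : Ideal (MvPolynomial ι k) :=
  Ideal.span {f | ∃ u v : ι →₀ ℕ, natVec u - natVec v ∈ L ∧
    f = monomial u (1 : k) - monomial v 1 ∧ fiberLT (fiber L u) F}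

/-- The ideal `I_{≤F̄}` generated by binomials of `I_L` whose fiber class is `≤_I F̄`. -/
def idealLE (k : Type*) [Field k] {ι : Type*} (L : Submodule ℤ (ι → ℤ))
    (F : Set (ι →₀ ℕ)) : Ideal (MvPolynomial ι k) :=
  Ideal.span {f | ∃ u v : ι →₀ ℕ, natVec u - natVec v ∈ L ∧
    f = monomial u (1 : k) - monomial v 1 ∧ fiberLE (fiber L u) F}

/-- `μ(I_L)` : the least cardinality of a binomial generating set of `I_L`. -/
def muIdeal (k : Type*) [Field k] {ι : Type*} (L : Submodule ℤ (ι → ℤ)) : ℕ :=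
  sInf {m | ∃ S : Finset (MvPolynomial ι k), S.card = m ∧
    (∀ f ∈ S, IsLatticeBinomial k L f) ∧
    Ideal.span (S : Set (MvPolynomial ι k)) = latticeIdeal k L}

/-- A Markov basis of `I_L` : a binomial generating set of least cardinality `μ(I_L)`. -/
def IsMarkovBasis (k : Type*) [Field k] {ι : Type*} (L : Submodule ℤ (ι → ℤ))
    (S : Finset (MvPolynomial ι k)) : Prop :=
  (∀ f ∈ S, IsLatticeBinomial k L f) ∧
  Ideal.span (S : Set (MvPolynomial ι k)) = latticeIdeal k L ∧
  S.card = muIdeal k L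

/-- `u` is an `L`-primitive vector : `u ≠ 0`, `u ∈ L`, and whenever `q • u ∈ L` for
a rational `q`, then `q` is an integer. -/
def IsLPrimitive {ι : Type*} (L : Submodule ℤ (ι → ℤ)) (u : ι → ℤ) : Prop :=
  u ≠ 0 ∧ u ∈ L ∧ ∀ (q : ℚ) (w : ι → ℤ), w ∈ L →
    (∀ i, (w i : ℚ) = q * (u i : ℚ)) → ∃ m : ℤ, q = (m : ℚ)

/-- Projection onto the coordinates in `σ_L`. -/
def projSigma {n : ℕ} (L : Submodule ℤ (Fin n → ℤ)) :
    (Fin n → ℤ) →ₗ[ℤ] ({i : Fin n // i ∈ sigmaL L} → ℤ) :=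
  LinearMap.pi fun j => LinearMap.proj j.1

/-- Projection onto the coordinates outside `σ_L` (giving `u ↦ u^σ`). -/
def projCompl {n : ℕ} (L : Submodule ℤ (Fin n → ℤ)) :
    (Fin n → ℤ) →ₗ[ℤ] ({i : Fin n // i ∉ sigmaL L} → ℤ) :=
  LinearMap.pi fun j => LinearMap.proj j.1

/-- An indispensable binomial: it appears, up to a constant multiple, in every Markov basis. -/
def IsIndispensableBinomial (k : Type*) [Field k] {ι : Type*} (L : Submodule ℤ (ι → ℤ))
    (f : MvPolynomial ι k) : Prop :=
  ∀ S : Finset (MvPolynomial ι k), IsMarkovBasis k L S → ∃ c : k, c ≠ 0 ∧ c • f ∈ S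

/-- An indispensable monomial: every Markov basis contains a binomial having it as a term. -/
def IsIndispensableMonomial (k : Type*) [Field k] {ι : Type*} (L : Submodule ℤ (ι → ℤ))
    (u : ι →₀ ℕ) : Prop :=
  ∀ S : Finset (MvPolynomial ι k), IsMarkovBasis k L S → ∃ f ∈ S, ∃ v : ι →₀ ℕ,
    f = monomial u (1 : k) - monomial v 1 ∨ f = monomial v (1 : k) - monomial u 1


section Stmt8Aux

variable {n : ℕ} {L : Submodule ℤ (Fin n → ℤ)}

private lemma natVec_add (a b : Fin n →₀ ℕ) : natVec (a + b) = natVec a + natVec b := by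
  funext i; simp [natVec]

private lemma self_mem_fiber (u : Fin n →₀ ℕ) : u ∈ fiber L u := by
  show natVec u - natVec u ∈ L
  rw [sub_self]; exact L.zero_mem

/-- Turn a nonnegative integer vector into a `Finsupp` over `ℕ`. -/
def toNatF {n : ℕ} (y : Fin n → ℤ) : Fin n →₀ ℕ :=
  Finsupp.equivFunOnFinite.symm fun i => (y i).toNat

private lemma natVec_toNatF {y : Fin n → ℤ} (hy : ∀ i, 0 ≤ y i) : natVec (toNatF y) = y := by
  funext i
  simp [natVec, toNatF, Int.toNat_of_nonneg (hy i)]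

private lemma fiberLE_iff {a b : Fin n →₀ ℕ} :
    fiberLE (fiber L a) (fiber L b) ↔
      ∃ t : Fin n → ℤ, (∀ i, 0 ≤ t i) ∧ t + natVec a - natVec b ∈ L := by
  constructor
  · rintro ⟨t, ht⟩
    refine ⟨natVec t, fun i => Int.ofNat_nonneg _, ?_⟩
    have h1 : t + a ∈ fiber L b := ht (Set.mem_image_of_mem _ (self_mem_fiber a))
    have h2 : natVec (t + a) - natVec b ∈ L := h1
    rwa [natVec_add] at h2
  · rintro ⟨t, htn, htL⟩
    refine ⟨toNatF t, ?_⟩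
    rintro _ ⟨v, hv, rfl⟩
    show natVec (toNatF t + v) - natVec b ∈ L
    rw [natVec_add, natVec_toNatF htn]
    have hv' : natVec v - natVec a ∈ L := hv
    have h2 : t + natVec v - natVec b
        = (natVec v - natVec a) + (t + natVec a - natVec b) := by ring
    rw [h2]
    exact L.add_mem hv' htL

private lemma fiber_congr {a b : Fin n →₀ ℕ} (h : natVec a - natVec b ∈ L) :
    fiber L a = fiber L b := by
  ext v
  show natVec v - natVec a ∈ L ↔ natVec v - natVec b ∈ L
  constructor
  · intro hv
    have h2 := L.add_mem hv h
    rwa [show natVec v - natVec a + (natVec a - natVec b) = natVec v - natVec b from by ring]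
      at h2
  · intro hv
    have h2 := L.sub_mem hv h
    rwa [show natVec v - natVec b - (natVec a - natVec b) = natVec v - natVec a from by ring]
      at h2

private lemma Lpure_le : Lpure L ≤ L :=
  Submodule.span_le.mpr fun _ hw => hw.1

private lemma Lpure_apply_eq_zero {v : Fin n → ℤ} (hv : v ∈ Lpure L) (i : Fin n)
    (hi : i ∉ sigmaL L) : v i = 0 := by
  induction hv using Submodule.span_induction with
  | mem w hw =>
    by_contra h
    exact hi ⟨w, hw, h⟩
  | zero => rfl
  | add x y _ _ hx hy => simp [hx, hy]
  | smul a x _ hx => simp [hx]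

private lemma exists_W (L : Submodule ℤ (Fin n → ℤ)) :
    ∃ W : Fin n → ℤ, W ∈ Lplus L ∧ (∀ i ∈ sigmaL L, 0 < W i) ∧ ∀ i ∉ sigmaL L, W i = 0 := by
  classical
  have hchoice : ∀ i : Fin n, ∃ w : Fin n → ℤ, w ∈ L ∧ (∀ j, 0 ≤ w j) ∧
      (∀ j, w j ≠ 0 → j ∈ sigmaL L) ∧ (i ∈ sigmaL L → 0 < w i) := by
    intro i
    by_cases h : i ∈ sigmaL L
    · obtain ⟨w, hw, hwi⟩ := h
      exact ⟨w, hw.1, hw.2, fun j hj => ⟨w, hw, hj⟩,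
        fun _ => lt_of_le_of_ne (hw.2 i) (Ne.symm hwi)⟩
    · exact ⟨0, L.zero_mem, fun j => le_refl 0, fun j hj => absurd rfl hj,
        fun h' => absurd h' h⟩
  choose w hwL hwnn hwsupp hwpos using hchoice
  refine ⟨∑ i, w i, ⟨Submodule.sum_mem _ fun i _ => hwL i, fun j => ?_⟩,
    fun i hi => ?_, fun i hi => ?_⟩
  · rw [Finset.sum_apply]
    exact Finset.sum_nonneg fun i _ => hwnn i j
  · rw [Finset.sum_apply]
    exact Finset.sum_pos' (fun j _ => hwnn j i) ⟨i, Finset.mem_univ i, hwpos i hi⟩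
  · rw [Finset.sum_apply]
    refine Finset.sum_eq_zero fun j _ => ?_
    by_contra h
    exact hi (hwsupp j i h)

private lemma key_nonneg {s : Set (Fin n)} {W : Fin n → ℤ} (hWpos : ∀ i ∈ s, 0 < W i)
    (hWnn : ∀ i, 0 ≤ W i) {y : Fin n → ℤ} (hy : ∀ i ∉ s, y i = 0) (i : Fin n) :
    0 ≤ y i + (∑ j, |y j|) * W i := by
  by_cases hi : i ∈ s
  · have h1 : |y i| ≤ ∑ j, |y j| :=
      Finset.single_le_sum (f := fun j => |y j|) (fun j _ => abs_nonneg (y j))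
        (Finset.mem_univ i)
    have h2 : 1 ≤ W i := hWpos i hi
    have hmn : (0:ℤ) ≤ ∑ j, |y j| := Finset.sum_nonneg fun j _ => abs_nonneg _
    nlinarith [neg_abs_le (y i)]
  · have h0 : y i = 0 := hy i hi
    have hmn : (0:ℤ) ≤ ∑ j, |y j| := Finset.sum_nonneg fun j _ => abs_nonneg _
    have := mul_nonneg hmn (hWnn i)
    linarith

private lemma mem_Lpure_of_support {v : Fin n → ℤ} (hv : v ∈ L)
    (hs : ∀ i ∉ sigmaL L, v i = 0) : v ∈ Lpure L := by
  obtain ⟨W, hWplus, hWpos, hWz⟩ := exists_W L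
  have hWpure : W ∈ Lpure L := Submodule.subset_span hWplus
  set m : ℤ := ∑ i, |v i| with hm
  have hplus : v + m • W ∈ Lplus L := by
    refine ⟨L.add_mem hv (L.smul_mem m hWplus.1), fun i => ?_⟩
    have h1 := key_nonneg hWpos hWplus.2 hs i
    simpa [hm] using h1
  have h2 : v = (v + m • W) - m • W := by
    funext i; simp
  rw [h2]
  exact Submodule.sub_mem _ (Submodule.subset_span hplus) (Submodule.smul_mem _ m hWpure)

open Classical in
/-- Extension by zero of a vector on `σ_L` to a vector on `Fin n`. -/
def extz {n : ℕ} (L : Submodule ℤ (Fin n → ℤ)) (x : {i : Fin n // i ∈ sigmaL L} → ℤ) :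
    Fin n → ℤ := fun i => if h : i ∈ sigmaL L then x ⟨i, h⟩ else 0

private lemma extz_zero (x : {i : Fin n // i ∈ sigmaL L} → ℤ) {i : Fin n}
    (hi : i ∉ sigmaL L) : extz L x i = 0 := by
  simp only [extz]
  exact dif_neg hi

private lemma extz_sub (x x' : {i : Fin n // i ∈ sigmaL L} → ℤ) :
    extz L (x - x') = extz L x - extz L x' := by
  funext i
  by_cases h : i ∈ sigmaL L <;> simp [extz, h]

private lemma proj_extz (x : {i : Fin n // i ∈ sigmaL L} → ℤ) :
    projSigma L (extz L x) = x := by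
  funext j
  simp [projSigma, extz, j.2]

private lemma extz_proj {v : Fin n → ℤ} (hv : ∀ i ∉ sigmaL L, v i = 0) :
    extz L (projSigma L v) = v := by
  funext i
  by_cases h : i ∈ sigmaL L
  · simp [extz, projSigma, h]
  · simp [extz, h, hv i h]

/-- The bounding constant used to translate into the nonnegative orthant. -/
def mOf {n : ℕ} (L : Submodule ℤ (Fin n → ℤ)) (x : {i : Fin n // i ∈ sigmaL L} → ℤ) : ℤ :=
  ∑ j, |extz L x j|

/-- The representative vector `u + ext(x) + m(x)·W`. -/
def Yv {n : ℕ} (L : Submodule ℤ (Fin n → ℤ)) (W : Fin n → ℤ) (u : Fin n →₀ ℕ)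
    (x : {i : Fin n // i ∈ sigmaL L} → ℤ) : Fin n → ℤ :=
  fun i => (u i : ℤ) + extz L x i + mOf L x * W i

end Stmt8Aux

/-- if `L_pure ≠ {0}`, the equivalence class of any `I_L`-fiber has
cardinality `|ℤ^σ / (L_pure)_σ|`. -/
theorem stmt8 {n : ℕ} (L : Submodule ℤ (Fin n → ℤ)) (hL : Lpure L ≠ ⊥) (u : Fin n →₀ ℕ) :
    Cardinal.mk ↥{G : Set (Fin n →₀ ℕ) | (∃ w : Fin n →₀ ℕ, G = fiber L w) ∧
        fiberEquiv (fiber L u) G} =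
    Cardinal.mk (({i : Fin n // i ∈ sigmaL L} → ℤ) ⧸
        Submodule.map (projSigma L) (Lpure L)) := by
  classical
  obtain ⟨W, hWplus, hWpos, hWz⟩ := exists_W L
  have hWL : W ∈ L := hWplus.1
  have hWnn : ∀ i, 0 ≤ W i := hWplus.2
  have hWpure : W ∈ Lpure L := Submodule.subset_span hWplus
  set S := {G : Set (Fin n →₀ ℕ) | (∃ w : Fin n →₀ ℕ, G = fiber L w) ∧
      fiberEquiv (fiber L u) G} with hS
  set Mσ := Submodule.map (projSigma L) (Lpure L) with hMσ
  -- nonnegativity of the representative vector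
  have hY_nn : ∀ x, ∀ i, 0 ≤ Yv L W u x i := by
    intro x i
    have h1 := key_nonneg hWpos hWnn (fun j hj => extz_zero x hj) i
    have h2 : (0:ℤ) ≤ (u i : ℤ) := Int.ofNat_nonneg _
    show 0 ≤ (u i : ℤ) + extz L x i + mOf L x * W i
    have h3 : mOf L x = ∑ j, |extz L x j| := rfl
    rw [h3]
    linarith
  have hwx : ∀ x, natVec (toNatF (Yv L W u x)) = Yv L W u x :=
    fun x => natVec_toNatF (hY_nn x)
  set f : ({i : Fin n // i ∈ sigmaL L} → ℤ) → Set (Fin n →₀ ℕ) :=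
    fun x => fiber L (toNatF (Yv L W u x)) with hf
  -- every value of f lies in the equivalence class
  have hf_mem : ∀ x, f x ∈ S := by
    intro x
    refine ⟨⟨toNatF (Yv L W u x), rfl⟩, ?_, ?_⟩
    · rw [fiberLE_iff]
      refine ⟨fun i => extz L x i + mOf L x * W i, ?_, ?_⟩
      · intro i
        exact key_nonneg hWpos hWnn (fun j hj => extz_zero x hj) i
      · rw [hwx]
        have h4 : (fun i => extz L x i + mOf L x * W i) + natVec u - Yv L W u x = 0 := by
          funext i
          simp [Yv, natVec]
          ring
        rw [h4]
        exact L.zero_mem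
    · rw [fiberLE_iff]
      refine ⟨fun i => mOf L x * W i - extz L x i, ?_, ?_⟩
      · intro i
        have h5 := key_nonneg hWpos hWnn (y := fun j => -(extz L x j))
          (fun j hj => by simp [extz_zero x hj]) i
        have h6 : (∑ j, |(-(extz L x j))|) = mOf L x := by
          simp [mOf]
        rw [h6] at h5
        show 0 ≤ mOf L x * W i - extz L x i
        linarith
      · rw [hwx]
        have h7 : (fun i => mOf L x * W i - extz L x i) + Yv L W u x - natVec u
            = (2 * mOf L x) • W := by
          funext i
          simp [Yv, natVec]
          ring
        rw [h7]
        exact L.smul_mem _ hWL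
  -- descent : the fiber only depends on x modulo Mσ
  have hdesc : ∀ x x', x - x' ∈ Mσ → f x = f x' := by
    intro x x' hx
    obtain ⟨ℓ, hℓ, hproj⟩ := hx
    have hℓσ : ∀ i ∉ sigmaL L, ℓ i = 0 := fun i hi => Lpure_apply_eq_zero hℓ i hi
    have hext : extz L (x - x') = ℓ := by
      rw [← hproj, extz_proj hℓσ]
    have hℓi : ∀ i, ℓ i = extz L x i - extz L x' i := by
      intro i
      rw [← hext, extz_sub]
      rfl
    apply fiber_congr
    rw [hwx, hwx]
    have h8 : Yv L W u x - Yv L W u x' = ℓ + (mOf L x - mOf L x') • W := by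
      funext i
      simp only [Pi.sub_apply, Pi.add_apply, Pi.smul_apply, smul_eq_mul, Yv, hℓi i]
      ring
    rw [h8]
    exact L.add_mem (Lpure_le hℓ) (L.smul_mem _ hWL)
  -- injectivity modulo Mσ
  have hinj : ∀ x x', f x = f x' → x - x' ∈ Mσ := by
    intro x x' hfe
    have h1 : toNatF (Yv L W u x) ∈ fiber L (toNatF (Yv L W u x')) := by
      rw [show fiber L (toNatF (Yv L W u x')) = f x' from rfl, ← hfe]
      exact self_mem_fiber _
    have h2 : Yv L W u x - Yv L W u x' ∈ L := by
      have h2' : natVec (toNatF (Yv L W u x)) - natVec (toNatF (Yv L W u x')) ∈ L := h1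
      rwa [hwx, hwx] at h2'
    have h3 : ∀ i ∉ sigmaL L, (Yv L W u x - Yv L W u x') i = 0 := by
      intro i hi
      simp [Yv, extz_zero x hi, extz_zero x' hi, hWz i hi]
    have h4 : Yv L W u x - Yv L W u x' ∈ Lpure L := mem_Lpure_of_support h2 h3
    have h5 : extz L x - extz L x' ∈ Lpure L := by
      have h5' : extz L x - extz L x'
          = (Yv L W u x - Yv L W u x') - (mOf L x - mOf L x') • W := by
        funext i
        simp only [Pi.sub_apply, Pi.smul_apply, smul_eq_mul, Yv]
        ring
      rw [h5']
      exact Submodule.sub_mem _ h4 (Submodule.smul_mem _ _ hWpure)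
    refine ⟨extz L x - extz L x', h5, ?_⟩
    rw [← extz_sub, proj_extz]
  -- surjectivity
  have hsurj : ∀ G ∈ S, ∃ x, f x = G := by
    rintro G ⟨⟨w, rfl⟩, hle, hge⟩
    obtain ⟨t, htn, htL⟩ := fiberLE_iff.mp hle
    obtain ⟨t', htn', htL'⟩ := fiberLE_iff.mp hge
    have hsum : t + t' ∈ Lplus L := by
      constructor
      · have h9 := L.add_mem htL htL'
        rwa [show t + natVec u - natVec w + (t' + natVec w - natVec u) = t + t' from by ring]
          at h9
      · intro i
        exact add_nonneg (htn i) (htn' i)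
    have htσ : ∀ i ∉ sigmaL L, t i = 0 := by
      intro i hi
      by_contra h
      have hpos : 0 < t i + t' i :=
        add_pos_of_pos_of_nonneg (lt_of_le_of_ne (htn i) (Ne.symm h)) (htn' i)
      exact hi ⟨t + t', hsum, by simpa using hpos.ne'⟩
    refine ⟨projSigma L t, ?_⟩
    have hext : extz L (projSigma L t) = t := extz_proj htσ
    apply fiber_congr
    rw [hwx]
    have h10 : Yv L W u (projSigma L t) - natVec w
        = (t + natVec u - natVec w) + (mOf L (projSigma L t)) • W := by
      funext i
      have := congrFun hext i
      simp only [Pi.sub_apply, Pi.add_apply, Pi.smul_apply, smul_eq_mul, Yv, natVec, this]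
      ring
    rw [h10]
    exact L.add_mem htL (L.smul_mem _ hWL)
  -- assemble the bijection
  let F : (({i : Fin n // i ∈ sigmaL L} → ℤ) ⧸ Mσ) → S :=
    Quotient.lift (fun x => (⟨f x, hf_mem x⟩ : S))
      (fun x x' h => Subtype.ext (hdesc x x' ((Submodule.quotientRel_def Mσ).mp h)))
  have hFbij : Function.Bijective F := by
    constructor
    · rintro ⟨a⟩ ⟨b⟩ hab
      refine (Submodule.Quotient.eq _).mpr (hinj a b ?_)
      exact congrArg Subtype.val hab
    · rintro ⟨G, hG⟩
      obtain ⟨x, hx⟩ := hsurj G hG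
      exact ⟨Submodule.Quotient.mk x, Subtype.ext hx⟩
  exact (Cardinal.mk_congr (Equiv.ofBijective F hFbij)).symm
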